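/- arXiv:2203.02084 — 2 statements merged into one kernel-verified Lean document; each statement's English description precedes it below -/
import Mathlib

section
/- Let M be a symmetric positive definite N×N real matrix, m > 0, λ > 0, κ > 0, and let M̄ = diag(M, m) and Λ̄ = diag(λI_N, 0) be (N+1)×(N+1) block matrices. Let A be an N×N real matrix and Ā = diag(A, 0). Let Ē be a b×(N+1) real matrix and W a symmetric b×b real matrix with nonnegative entries, such that ĀᵀM̄ + M̄Ā + ĒᵀWĒ + Λ̄M̄ ⪯ 0. Let ω : ℝ → ℝ^N have derivative A ω(t) + v₁ + v₂ + c at time t for some v₁, v₂, c ∈ ℝ^N, set ω̄(t) = (ω(t), 1) ∈ ℝ^{N+1}, and suppose Ē ω̄(t) ≥ 0 entrywise. Then (i) V(ω̄(t)) := (1/κ)√(ω̄(t)ᵀM̄ω̄(t)) ≥ (1/κ)√m, and (ii) t ↦ V(ω̄(t)) has a derivative D at t satisfying D ≤ −(λ/2) V(ω̄(t)) + (λ/(2κ))√m + (1/κ)(√(v₁ᵀMv₁) + √(v₂ᵀMv₂) + √(cᵀMc)). (Per-mode differential inequality for the simulation function in a mode whose cell boundaries do not all cross the origin, as in the proof of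 Theorem 1.) -/
/-!
Along the trajectory, `V² κ² = ωᵀMω + m`, so `V` is differentiable (the radicand is `≥ m > 0`) with
`d/dt (κV) = ωᵀM ω̇ / √(ωᵀMω + m)`. Evaluating the LMI at `ω̄ = (ω, 1)` and discarding the term
`(Ēω̄)ᵀ W (Ēω̄) ≥ 0` (both factors are entrywise nonnegative) gives `ωᵀMAω ≤ -(λ/2) ωᵀMω`, while
Cauchy–Schwarz for the form `M` bounds each `ωᵀMv` by `√(ωᵀMω + m) √(vᵀMv)`. Finally
`ωᵀMω / √(ωᵀMω + m) ≥ √(ωᵀMω + m) - √m`, which produces the constant `(λ/(2κ))√m`.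
-/

open Matrix

/-- `aug v = (v, 1)`: the vector obtained by appending the entry `1` to `v`. -/
def aug {N : ℕ} (v : Fin N → ℝ) : Fin N ⊕ Unit → ℝ := Sum.elim v fun _ => 1

namespace Matrix

variable {n : Type*} [Fintype n]

theorem IsHermitian.dotProduct_mulVec_comm {M : Matrix n n ℝ} (hM : M.IsHermitian)
    (x y : n → ℝ) : x ⬝ᵥ M *ᵥ y = y ⬝ᵥ M *ᵥ x := by
  rw [← dotProduct_transpose_mulVec, ← conjTranspose_eq_transpose_of_trivial, hM.eq]

theorem PosSemidef.dotProduct_mulVec_le_sqrt_mul_sqrt {M : Matrix n n ℝ} (hM : M.PosSemidef)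
    (x y : n → ℝ) : x ⬝ᵥ M *ᵥ y ≤ √(x ⬝ᵥ M *ᵥ x) * √(y ⬝ᵥ M *ᵥ y) := by
  classical
  have hCS := LinearMap.BilinForm.apply_mul_apply_le_of_forall_zero_le (toLinearMap₂' ℝ M)
    (fun z => by simpa [toLinearMap₂'_apply'] using hM.dotProduct_mulVec_nonneg z) x y
  simp only [toLinearMap₂'_apply'] at hCS
  rw [hM.isHermitian.dotProduct_mulVec_comm y x, ← sq] at hCS
  rw [← Real.sqrt_mul (by simpa using hM.dotProduct_mulVec_nonneg x)]
  exact (le_abs_self _).trans (Real.abs_le_sqrt hCS)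

theorem dotProduct_mulVec_self_nonneg_of_nonneg {W : Matrix n n ℝ} (hW : ∀ i j, 0 ≤ W i j)
    {u : n → ℝ} (hu : 0 ≤ u) : 0 ≤ u ⬝ᵥ W *ᵥ u :=
  dotProduct_nonneg_of_nonneg hu fun i => dotProduct_nonneg_of_nonneg (fun j => hW i j) hu

end Matrix

theorem HasDerivAt.dotProduct {n : Type*} [Fintype n] {x y : ℝ → n → ℝ} {x' y' : n → ℝ} {t : ℝ}
    (hx : HasDerivAt x x' t) (hy : HasDerivAt y y' t) :
    HasDerivAt (fun s => x s ⬝ᵥ y s) (x' ⬝ᵥ y t + x t ⬝ᵥ y') t := by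
  unfold _root_.dotProduct
  rw [← Finset.sum_add_distrib]
  exact HasDerivAt.fun_sum fun i _ => (hasDerivAt_pi.1 hx i).mul (hasDerivAt_pi.1 hy i)

theorem HasDerivAt.mulVec {m n : Type*} [Fintype n] (M : Matrix m n ℝ) {y : ℝ → n → ℝ}
    {y' : n → ℝ} {t : ℝ} (hy : HasDerivAt y y' t) :
    HasDerivAt (fun s => M *ᵥ y s) (M *ᵥ y') t :=
  hasDerivAt_pi.2 fun i => by
    have h := (hasDerivAt_const t fun j => M i j).dotProduct hy
    rw [zero_dotProduct, zero_add] at h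
    exact h

theorem aug_dotProduct_fromBlocks_mulVec_aug {N : ℕ} (P : Matrix (Fin N) (Fin N) ℝ)
    (S : Matrix Unit Unit ℝ) (x y : Fin N → ℝ) :
    aug x ⬝ᵥ fromBlocks P 0 0 S *ᵥ aug y = x ⬝ᵥ P *ᵥ y + S () () := by
  simp [aug, mulVec, dotProduct]

theorem HasDerivAt.dotProduct_mulVec_self {n : Type*} [Fintype n] {M : Matrix n n ℝ}
    (hM : M.IsHermitian) {x : ℝ → n → ℝ} {x' : n → ℝ} {t : ℝ} (hx : HasDerivAt x x' t) :
    HasDerivAt (fun s => x s ⬝ᵥ M *ᵥ x s) (2 * (x t ⬝ᵥ M *ᵥ x')) t := by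
  convert hx.dotProduct (hx.mulVec M) using 1
  rw [hM.dotProduct_mulVec_comm x']
  ring

section LMI

variable {N b : ℕ} {M A : Matrix (Fin N) (Fin N) ℝ} {m lam : ℝ}
  {E : Matrix (Fin b) (Fin N ⊕ Unit) ℝ} {W : Matrix (Fin b) (Fin b) ℝ}

theorem aug_dotProduct_lmi_mulVec_aug (hM : M.IsHermitian) (x : Fin N → ℝ) :
    aug x ⬝ᵥ ((fromBlocks A 0 0 0)ᵀ * fromBlocks M 0 0 (of fun _ _ => m)
        + fromBlocks M 0 0 (of fun _ _ => m) * fromBlocks A 0 0 0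
        + Eᵀ * W * E
        + fromBlocks (lam • (1 : Matrix (Fin N) (Fin N) ℝ)) 0 0 0
            * fromBlocks M 0 0 (of fun _ _ => m)) *ᵥ aug x
      = 2 * (x ⬝ᵥ M *ᵥ (A *ᵥ x)) + (E *ᵥ aug x) ⬝ᵥ W *ᵥ (E *ᵥ aug x)
        + lam * (x ⬝ᵥ M *ᵥ x) := by
  simp only [add_mulVec, dotProduct_add, fromBlocks_transpose, fromBlocks_multiply,
    transpose_zero, Matrix.mul_zero, Matrix.zero_mul, add_zero, Matrix.smul_mul,
    aug_dotProduct_fromBlocks_mulVec_aug, Matrix.zero_apply, ← mulVec_mulVec,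
    dotProduct_transpose_mulVec, smul_mulVec, one_mulVec, dotProduct_smul, smul_eq_mul]
  rw [dotProduct_comm (M *ᵥ x), hM.dotProduct_mulVec_comm (A *ᵥ x), dotProduct_comm (W *ᵥ _)]
  ring

theorem dotProduct_mulVec_mulVec_le_of_lmi (hM : M.IsHermitian) (hW : ∀ i j, 0 ≤ W i j)
    (hLMI : (-((fromBlocks A 0 0 0)ᵀ * fromBlocks M 0 0 (of fun _ _ => m)
        + fromBlocks M 0 0 (of fun _ _ => m) * fromBlocks A 0 0 0
        + Eᵀ * W * E
        + fromBlocks (lam • (1 : Matrix (Fin N) (Fin N) ℝ)) 0 0 0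
            * fromBlocks M 0 0 (of fun _ _ => m))).PosSemidef)
    {x : Fin N → ℝ} (hE : 0 ≤ E *ᵥ aug x) :
    x ⬝ᵥ M *ᵥ (A *ᵥ x) ≤ -(lam / 2) * (x ⬝ᵥ M *ᵥ x) := by
  have hLMI_x := hLMI.dotProduct_mulVec_nonneg (aug x)
  rw [star_trivial, neg_mulVec, dotProduct_neg, aug_dotProduct_lmi_mulVec_aug hM] at hLMI_x
  linarith [dotProduct_mulVec_self_nonneg_of_nonneg hW hE]

end LMI

theorem div_sqrt_le_of_le_neg_mul_add_sqrt_mul {q m lam X S : ℝ} (hq : 0 ≤ q) (hm : 0 < m)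
    (hlam : 0 ≤ lam) (hX : X ≤ -(lam / 2) * q + √(q + m) * S) :
    X / √(q + m) ≤ -(lam / 2) * √(q + m) + lam / 2 * √m + S := by
  have hsqrt_m : 0 < √m := Real.sqrt_pos.2 hm
  have hsqrt_le : √m ≤ √(q + m) := Real.sqrt_le_sqrt (by linarith)
  have hsq : √(q + m) ^ 2 = q + m := Real.sq_sqrt (by linarith)
  have hm_le : m ≤ √m * √(q + m) :=
    (Real.mul_self_sqrt hm.le).symm.le.trans (mul_le_mul_of_nonneg_left hsqrt_le hsqrt_m.le)
  rw [div_le_iff₀ (hsqrt_m.trans_le hsqrt_le)]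
  nlinarith

theorem stmt_8_general {N b : ℕ} (M : Matrix (Fin N) (Fin N) ℝ) (hM : M.PosDef)
    (m lam κ : ℝ) (hm : 0 < m) (hlam : 0 < lam) (hκ : 0 < κ)
    (A : Matrix (Fin N) (Fin N) ℝ)
    (Ebar : Matrix (Fin b) (Fin N ⊕ Unit) ℝ)
    (W : Matrix (Fin b) (Fin b) ℝ) (hWpos : ∀ i j, 0 ≤ W i j)
    (hLMI : (-((Matrix.fromBlocks A 0 0 0)ᵀ * Matrix.fromBlocks M 0 0 (Matrix.of fun _ _ => m)
        + Matrix.fromBlocks M 0 0 (Matrix.of fun _ _ => m) * Matrix.fromBlocks A 0 0 0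
        + Ebarᵀ * W * Ebar
        + Matrix.fromBlocks (lam • (1 : Matrix (Fin N) (Fin N) ℝ)) 0 0 0
            * Matrix.fromBlocks M 0 0 (Matrix.of fun _ _ => m))).PosSemidef)
    (ω : ℝ → Fin N → ℝ) (v₁ v₂ c : Fin N → ℝ) (t : ℝ)
    (hω : HasDerivAt ω (A *ᵥ ω t + v₁ + v₂ + c) t)
    (hE : ∀ i, 0 ≤ (Ebar *ᵥ aug (ω t)) i) :
    (1 / κ) * Real.sqrt m ≤
      (1 / κ) * Real.sqrt (aug (ω t) ⬝ᵥ
        Matrix.fromBlocks M 0 0 (Matrix.of fun _ _ => m) *ᵥ aug (ω t)) ∧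
    ∃ D : ℝ,
      HasDerivAt (fun s => (1 / κ) * Real.sqrt (aug (ω s) ⬝ᵥ
          Matrix.fromBlocks M 0 0 (Matrix.of fun _ _ => m) *ᵥ aug (ω s))) D t ∧
      D ≤ -(lam / 2) * ((1 / κ) * Real.sqrt (aug (ω t) ⬝ᵥ
            Matrix.fromBlocks M 0 0 (Matrix.of fun _ _ => m) *ᵥ aug (ω t)))
        + (lam / (2 * κ)) * Real.sqrt m
        + (1 / κ) * (Real.sqrt (v₁ ⬝ᵥ M *ᵥ v₁) + Real.sqrt (v₂ ⬝ᵥ M *ᵥ v₂)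
          + Real.sqrt (c ⬝ᵥ M *ᵥ c)) := by
  simp only [aug_dotProduct_fromBlocks_mulVec_aug, of_apply]
  set q := ω t ⬝ᵥ M *ᵥ ω t
  set S := √(v₁ ⬝ᵥ M *ᵥ v₁) + √(v₂ ⬝ᵥ M *ᵥ v₂) + √(c ⬝ᵥ M *ᵥ c)
  have hq : 0 ≤ q := hM.posSemidef.dotProduct_mulVec_nonneg (ω t)
  have hκ' : 0 ≤ 1 / κ := by positivity
  refine ⟨mul_le_mul_of_nonneg_left (Real.sqrt_le_sqrt (by linarith)) hκ', ?_⟩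
  have hcs (v : Fin N → ℝ) : ω t ⬝ᵥ M *ᵥ v ≤ √(q + m) * √(v ⬝ᵥ M *ᵥ v) :=
    (hM.posSemidef.dotProduct_mulVec_le_sqrt_mul_sqrt _ v).trans <|
      mul_le_mul_of_nonneg_right (Real.sqrt_le_sqrt (by linarith)) (Real.sqrt_nonneg _)
  have hdecay : ω t ⬝ᵥ M *ᵥ (A *ᵥ ω t + v₁ + v₂ + c) ≤ -(lam / 2) * q + √(q + m) * S := by
    simp only [mulVec_add, dotProduct_add]
    linarith [dotProduct_mulVec_mulVec_le_of_lmi hM.isHermitian hWpos hLMI hE, hcs v₁, hcs v₂,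
      hcs c]
  have hderiv := (((hω.dotProduct_mulVec_self hM.isHermitian).add_const m).sqrt
    (by positivity)).const_mul (1 / κ)
  refine ⟨_, hderiv, ?_⟩
  rw [mul_div_mul_left _ _ two_ne_zero]
  calc 1 / κ * ((ω t ⬝ᵥ M *ᵥ (A *ᵥ ω t + v₁ + v₂ + c)) / √(q + m))
      ≤ 1 / κ * (-(lam / 2) * √(q + m) + lam / 2 * √m + S) :=
        mul_le_mul_of_nonneg_left
          (div_sqrt_le_of_le_neg_mul_add_sqrt_mul hq hm hlam.le hdecay) hκ'
    _ = -(lam / 2) * (1 / κ * √(q + m)) + lam / (2 * κ) * √m + 1 / κ * S := by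
        field_simp

/-- Per-mode differential inequality for the simulation function in a mode whose cell
boundaries do not all cross the origin. With `M̄ = diag(M, m)`, `Ā = diag(A, 0)`,
`Λ̄ = diag(λ Iₙ, 0)`, the LMI `Āᵀ M̄ + M̄ Ā + Ēᵀ W Ē + Λ̄ M̄ ⪯ 0`, the augmented state
`ω̄(t) = (ω(t), 1)` in the cell `Ē ω̄(t) ≥ 0`, and `ω̇ = A ω + v₁ + v₂ + c`:
(i) `V(ω̄(t)) ≥ (1/κ)√m`, and (ii) `V(ω̄(·))` has a derivative `D` at `t` with
`D ≤ -(λ/2) V(ω̄(t)) + (λ/(2κ))√m + (1/κ)(√(v₁ᵀMv₁) + √(v₂ᵀMv₂) + √(cᵀMc))`. -/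
theorem stmt_8 {N b : ℕ} (M : Matrix (Fin N) (Fin N) ℝ) (hM : M.PosDef)
    (m lam κ : ℝ) (hm : 0 < m) (hlam : 0 < lam) (hκ : 0 < κ)
    (A : Matrix (Fin N) (Fin N) ℝ)
    (Ebar : Matrix (Fin b) (Fin N ⊕ Unit) ℝ)
    (W : Matrix (Fin b) (Fin b) ℝ) (hW : W.IsSymm) (hWpos : ∀ i j, 0 ≤ W i j)
    (hLMI : (-((Matrix.fromBlocks A 0 0 0)ᵀ * Matrix.fromBlocks M 0 0 (Matrix.of fun _ _ => m)
        + Matrix.fromBlocks M 0 0 (Matrix.of fun _ _ => m) * Matrix.fromBlocks A 0 0 0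
        + Ebarᵀ * W * Ebar
        + Matrix.fromBlocks (lam • (1 : Matrix (Fin N) (Fin N) ℝ)) 0 0 0
            * Matrix.fromBlocks M 0 0 (Matrix.of fun _ _ => m))).PosSemidef)
    (ω : ℝ → Fin N → ℝ) (v₁ v₂ c : Fin N → ℝ) (t : ℝ)
    (hω : HasDerivAt ω (A *ᵥ ω t + v₁ + v₂ + c) t)
    (hE : ∀ i, 0 ≤ (Ebar *ᵥ aug (ω t)) i) :
    (1 / κ) * Real.sqrt m ≤
      (1 / κ) * Real.sqrt (aug (ω t) ⬝ᵥ
        Matrix.fromBlocks M 0 0 (Matrix.of fun _ _ => m) *ᵥ aug (ω t)) ∧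
    ∃ D : ℝ,
      HasDerivAt (fun s => (1 / κ) * Real.sqrt (aug (ω s) ⬝ᵥ
          Matrix.fromBlocks M 0 0 (Matrix.of fun _ _ => m) *ᵥ aug (ω s))) D t ∧
      D ≤ -(lam / 2) * ((1 / κ) * Real.sqrt (aug (ω t) ⬝ᵥ
            Matrix.fromBlocks M 0 0 (Matrix.of fun _ _ => m) *ᵥ aug (ω t)))
        + (lam / (2 * κ)) * Real.sqrt m
        + (1 / κ) * (Real.sqrt (v₁ ⬝ᵥ M *ᵥ v₁) + Real.sqrt (v₂ ⬝ᵥ M *ᵥ v₂)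
          + Real.sqrt (c ⬝ᵥ M *ᵥ c)) :=
  stmt_8_general M hM m lam κ hm hlam hκ A Ebar W hWpos hLMI ω v₁ v₂ c t hω hE
end

section
/- (Forward invariance of the robust approximate simulation relation.) Under the hypotheses of the single-mode Theorem 1 with cell boundaries through the origin—matrices A, B, C, F, G, H, L, P, Q, R, K with H = C P, P F = A P + B Q; M symmetric positive definite N×N (N = n+m) with M − C′ᵀC′ ⪰ 0 (C′ = [C 0]) and A′ᵀM + MA′ + EᵀWE + λM ⪯ 0 (A′ = diag(A+BK, F+GL), λ > 0, W symmetric with nonnegative entries); trajectories x₁, x₂ satisfying for all t ≥ 0 the concrete dynamics with the interface u₁(t) = R ū₂(t) + (Q + R L) x₂(t) + K(x₁(t) − P x₂(t)), the transformed abstraction dynamics, with joint state ω(t) = (x₁(t) − P x₂(t), x₂(t)) remaining in the cell E ω(t) ≥ 0, and with √(v₁(t)ᵀMv₁(t)) ≤ β₁, √(v₂(t)ᵀMv₂(t)) ≤ β₂, √(c′(t)ᵀMc′(t)) ≤ β₃ for v₁(t) = ((BR−PG)L x₂(t), 0), v₂(t) = ((BR−PG)ū₂(t), G ū₂(t)),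 c′(t) = (c(t), 0)—the sublevel set of the simulation function of level b := (2/(λκ))(β₁ + β₂ + β₃) is forward invariant: if V(ω(0)) ≤ b then V(ω(t)) ≤ b for all t ≥ 0, where V(ω) = (1/κ)√(ωᵀMω), κ > 0. -/
/-!
Along a trajectory the joint state `ω = (x₁ - P x₂, x₂)` obeys `ω' = A'ω + d` with
`d = v₁ + v₂ + c'`. For `f = ωᵀMω`, the LMI together with the cell condition `Eω ≥ 0` and
`W ≥ 0` gives `2 ωᵀMA'ω ≤ -λ f`, while Cauchy–Schwarz and the triangle inequality for the
seminorm `√(·ᵀM·)` bound the forcing term by `2 (β₁ + β₂ + β₃) √f`. Hence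
`f' ≤ √f (2β - λ√f) < 0` as soon as `√f > 2β/λ`, so `f` can never cross the level `(2β/λ)²`,
which is the level `b` of `V = √f / κ`.
-/

open Matrix

namespace Matrix

variable {ι : Type*} [Fintype ι] {S : Matrix ι ι ℝ}

lemma PosSemidef.dotProduct_mulVec_comm (hS : S.PosSemidef) (x y : ι → ℝ) :
    x ⬝ᵥ S *ᵥ y = y ⬝ᵥ S *ᵥ x := by
  have hST : Sᵀ = S := by simpa using hS.isHermitian.eq
  rw [← dotProduct_transpose_mulVec, hST]

lemma PosSemidef.dotProduct_mulVec_le_sqrt_mul_sqrt_s15 (hS : S.PosSemidef) (x y : ι → ℝ) :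
    x ⬝ᵥ S *ᵥ y ≤ √(x ⬝ᵥ S *ᵥ x) * √(y ⬝ᵥ S *ᵥ y) := by
  have hx : 0 ≤ x ⬝ᵥ S *ᵥ x := by simpa using hS.dotProduct_mulVec_nonneg x
  -- the quadratic `r ↦ (x + r y)ᵀ S (x + r y)` is nonnegative, so its discriminant is not
  have hquad : ∀ r : ℝ, 0 ≤ (y ⬝ᵥ S *ᵥ y) * (r * r) + (2 * (x ⬝ᵥ S *ᵥ y)) * r
      + x ⬝ᵥ S *ᵥ x := fun r => by
    have h := hS.dotProduct_mulVec_nonneg (x + r • y)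
    simp only [star_trivial, mulVec_add, mulVec_smul, add_dotProduct, dotProduct_add,
      smul_dotProduct, dotProduct_smul, smul_eq_mul, hS.dotProduct_mulVec_comm y x] at h
    linarith
  have hsq : (x ⬝ᵥ S *ᵥ y) ^ 2 ≤ (x ⬝ᵥ S *ᵥ x) * (y ⬝ᵥ S *ᵥ y) := by
    have := discrim_le_zero hquad
    rw [discrim] at this
    nlinarith
  rw [← Real.sqrt_mul hx]
  exact Real.le_sqrt_of_sq_le hsq

lemma PosSemidef.sqrt_dotProduct_mulVec_add_le (hS : S.PosSemidef) (x y : ι → ℝ) :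
    √((x + y) ⬝ᵥ S *ᵥ (x + y)) ≤ √(x ⬝ᵥ S *ᵥ x) + √(y ⬝ᵥ S *ᵥ y) := by
  have hx : 0 ≤ x ⬝ᵥ S *ᵥ x := by simpa using hS.dotProduct_mulVec_nonneg x
  have hy : 0 ≤ y ⬝ᵥ S *ᵥ y := by simpa using hS.dotProduct_mulVec_nonneg y
  have hxy := hS.dotProduct_mulVec_le_sqrt_mul_sqrt_s15 x y
  have hexp : (x + y) ⬝ᵥ S *ᵥ (x + y)
      = x ⬝ᵥ S *ᵥ x + 2 * (x ⬝ᵥ S *ᵥ y) + y ⬝ᵥ S *ᵥ y := by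
    simp only [mulVec_add, add_dotProduct, dotProduct_add, hS.dotProduct_mulVec_comm y x]
    ring
  rw [Real.sqrt_le_iff, hexp]
  refine ⟨by positivity, ?_⟩
  nlinarith [Real.sq_sqrt hx, Real.sq_sqrt hy]

lemma dotProduct_mulVec_nonneg_of_nonneg {W : Matrix ι ι ℝ} (hW : ∀ i j, 0 ≤ W i j)
    {y : ι → ℝ} (hy : ∀ i, 0 ≤ y i) : 0 ≤ y ⬝ᵥ W *ᵥ y :=
  Finset.sum_nonneg fun i _ =>
    mul_nonneg (hy i) (Finset.sum_nonneg fun j _ => mul_nonneg (hW i j) (hy j))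

lemma dotProduct_transpose_mul_mul_mulVec_nonneg {β : Type*} [Fintype β]
    {E : Matrix β ι ℝ} {W : Matrix β β ℝ} (hW : ∀ i j, 0 ≤ W i j) {x : ι → ℝ}
    (hEx : ∀ i, 0 ≤ (E *ᵥ x) i) : 0 ≤ x ⬝ᵥ (Eᵀ * W * E) *ᵥ x := by
  rw [Matrix.mul_assoc, ← mulVec_mulVec, dotProduct_transpose_mulVec, ← mulVec_mulVec,
    dotProduct_comm]
  exact dotProduct_mulVec_nonneg_of_nonneg hW hEx

lemma two_mul_dotProduct_mulVec_le_of_posSemidef_neg {M A S : Matrix ι ι ℝ} {lam : ℝ}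
    (hM : M.PosSemidef) (hLMI : (-(Aᵀ * M + M * A + S + lam • M)).PosSemidef)
    {x : ι → ℝ} (hS : 0 ≤ x ⬝ᵥ S *ᵥ x) :
    2 * (x ⬝ᵥ M *ᵥ (A *ᵥ x)) ≤ -lam * (x ⬝ᵥ M *ᵥ x) := by
  have h := hLMI.dotProduct_mulVec_nonneg x
  have hAM : x ⬝ᵥ Aᵀ *ᵥ (M *ᵥ x) = x ⬝ᵥ M *ᵥ (A *ᵥ x) := by
    rw [dotProduct_transpose_mulVec, hM.dotProduct_mulVec_comm, dotProduct_comm]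
  simp only [star_trivial, neg_mulVec, dotProduct_neg, add_mulVec, dotProduct_add,
    smul_mulVec, dotProduct_smul, smul_eq_mul, ← mulVec_mulVec] at h
  rw [hAM] at h
  linarith

end Matrix

section Derivatives

variable {ι κ : Type*} {t : ℝ}

lemma HasDerivAt.sumElim {u : ℝ → ι → ℝ} {v : ℝ → κ → ℝ} {u' : ι → ℝ} {v' : κ → ℝ}
    (hu : HasDerivAt u u' t) (hv : HasDerivAt v v' t) :
    HasDerivAt (fun s => Sum.elim (u s) (v s)) (Sum.elim u' v') t :=
  hasDerivAt_pi.2 fun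
    | .inl i => hasDerivAt_pi.1 hu i
    | .inr i => hasDerivAt_pi.1 hv i

variable [Fintype ι]

lemma HasDerivAt.mulVec_s15 {u : ℝ → ι → ℝ} {u' : ι → ℝ} (A : Matrix κ ι ℝ)
    (hu : HasDerivAt u u' t) : HasDerivAt (fun s => A *ᵥ u s) (A *ᵥ u') t :=
  hasDerivAt_pi.2 fun i =>
    HasDerivAt.fun_sum fun j _ => (hasDerivAt_pi.1 hu j).const_mul (A i j)

lemma HasDerivAt.dotProduct_s15 {u v : ℝ → ι → ℝ} {u' v' : ι → ℝ}
    (hu : HasDerivAt u u' t) (hv : HasDerivAt v v' t) :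
    HasDerivAt (fun s => u s ⬝ᵥ v s) (u' ⬝ᵥ v t + u t ⬝ᵥ v') t := by
  have h : HasDerivAt (fun s => ∑ i, u s i * v s i)
      (∑ i, (u' i * v t i + u t i * v' i)) t :=
    HasDerivAt.fun_sum fun i _ => (hasDerivAt_pi.1 hu i).mul (hasDerivAt_pi.1 hv i)
  rwa [Finset.sum_add_distrib] at h

end Derivatives

lemma image_le_of_hasDerivAt_neg_of_lt {f f' : ℝ → ℝ} {c : ℝ}
    (hf : ∀ s ≥ 0, HasDerivAt f (f' s) s) (hneg : ∀ s ≥ 0, c < f s → f' s < 0)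
    (h0 : f 0 ≤ c) {t : ℝ} (ht : 0 ≤ t) : f t ≤ c := by
  refine le_of_forall_pos_le_add fun ε hε => ?_
  set δ := ε / (1 + t)
  have hδ : 0 < δ := by positivity
  -- `f` cannot cross the strictly increasing fence `c + δ (1 + s)`, which lies above `c`
  have hfence : ∀ ⦃s⦄, s ∈ Set.Icc 0 t → f s ≤ c + δ * (1 + s) :=
    image_le_of_deriv_right_lt_deriv_boundary' (B' := fun _ => δ)
      (fun s hs => (hf s hs.1).continuousAt.continuousWithinAt)
      (fun s hs => (hf s hs.1).hasDerivWithinAt)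
      (by nlinarith) (by fun_prop)
      (fun s _ => by
        simpa using (((hasDerivAt_id s).const_add 1).const_mul δ).const_add c
          |>.hasDerivWithinAt)
      (fun s hs hfs => (hneg s hs.1 (by nlinarith [hs.1])).trans hδ)
  have hδt : δ * (1 + t) = ε := div_mul_cancel₀ ε (by positivity)
  simpa [hδt] using hfence (Set.right_mem_Icc.2 ht)

theorem Matrix.PosSemidef.sqrt_dotProduct_mulVec_le_of_hasDerivAt {ι : Type*} [Fintype ι]
    {M A : Matrix ι ι ℝ} (hM : M.PosSemidef) {w d : ℝ → ι → ℝ} {lam β : ℝ} (hlam : 0 < lam)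
    (hw : ∀ s ≥ 0, HasDerivAt w (A *ᵥ w s + d s) s)
    (hA : ∀ s ≥ 0, 2 * (w s ⬝ᵥ M *ᵥ (A *ᵥ w s)) ≤ -lam * (w s ⬝ᵥ M *ᵥ w s))
    (hd : ∀ s ≥ 0, √(d s ⬝ᵥ M *ᵥ d s) ≤ β)
    (h0 : √(w 0 ⬝ᵥ M *ᵥ w 0) ≤ 2 * β / lam) {t : ℝ} (ht : 0 ≤ t) :
    √(w t ⬝ᵥ M *ᵥ w t) ≤ 2 * β / lam := by
  set r := 2 * β / lam
  have hr : 0 ≤ r := by have := (Real.sqrt_nonneg _).trans (hd 0 le_rfl); positivity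
  have hf : ∀ s ≥ 0, HasDerivAt (fun s => w s ⬝ᵥ M *ᵥ w s)
      (2 * (w s ⬝ᵥ M *ᵥ (A *ᵥ w s)) + 2 * (w s ⬝ᵥ M *ᵥ d s)) s := fun s hs => by
    convert (hw s hs).dotProduct_s15 ((hw s hs).mulVec_s15 M) using 1
    rw [hM.dotProduct_mulVec_comm (A *ᵥ w s + d s), mulVec_add, dotProduct_add]
    ring
  -- above the level `r²` the dissipation `-lam f` beats the forcing `2 β √f`
  have hdecr : ∀ s ≥ 0, r ^ 2 < w s ⬝ᵥ M *ᵥ w s →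
      2 * (w s ⬝ᵥ M *ᵥ (A *ᵥ w s)) + 2 * (w s ⬝ᵥ M *ᵥ d s) < 0 := fun s hs hlt => by
    have hf0 : 0 ≤ w s ⬝ᵥ M *ᵥ w s := by simpa using hM.dotProduct_mulVec_nonneg (w s)
    have hrs : r < √(w s ⬝ᵥ M *ᵥ w s) := (Real.lt_sqrt hr).2 hlt
    have hforce : w s ⬝ᵥ M *ᵥ d s ≤ √(w s ⬝ᵥ M *ᵥ w s) * β :=
      (hM.dotProduct_mulVec_le_sqrt_mul_sqrt_s15 _ _).trans
        (mul_le_mul_of_nonneg_left (hd s hs) (Real.sqrt_nonneg _))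
    have hlamr : lam * r = 2 * β := mul_div_cancel₀ _ hlam.ne'
    nlinarith [hA s hs, Real.sq_sqrt hf0, mul_pos hlam (sub_pos.2 hrs)]
  have hle := image_le_of_hasDerivAt_neg_of_lt hf hdecr
    ((Real.sqrt_le_iff.1 h0).2) ht
  exact Real.sqrt_le_iff.2 ⟨hr, hle⟩

lemma tracking_error_dynamics {n m p q : ℕ}
    {A : Matrix (Fin n) (Fin n) ℝ} {B : Matrix (Fin n) (Fin p) ℝ}
    {F : Matrix (Fin m) (Fin m) ℝ} {G : Matrix (Fin m) (Fin q) ℝ}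
    {L : Matrix (Fin q) (Fin m) ℝ} {P : Matrix (Fin n) (Fin m) ℝ}
    {Q : Matrix (Fin p) (Fin m) ℝ} {R : Matrix (Fin p) (Fin q) ℝ}
    {K : Matrix (Fin p) (Fin n) ℝ} (hPF : P * F = A * P + B * Q)
    {x₁ c : Fin n → ℝ} {x₂ : Fin m → ℝ} {u : Fin p → ℝ} {ubar : Fin q → ℝ}
    (hu : u = R *ᵥ ubar + (Q + R * L) *ᵥ x₂ + K *ᵥ (x₁ - P *ᵥ x₂)) :
    A *ᵥ x₁ + B *ᵥ u + c - P *ᵥ ((F + G * L) *ᵥ x₂ + G *ᵥ ubar) =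
      (A + B * K) *ᵥ (x₁ - P *ᵥ x₂) + (B * R - P * G) *ᵥ (L *ᵥ x₂)
        + (B * R - P * G) *ᵥ ubar + c := by
  subst hu
  simp only [mulVec_add, mulVec_sub, add_mulVec, sub_mulVec, mulVec_mulVec, Matrix.add_mul,
    Matrix.sub_mul, Matrix.mul_assoc, hPF]
  abel

lemma hasDerivAt_trackingError {n m p q : ℕ}
    {A : Matrix (Fin n) (Fin n) ℝ} {B : Matrix (Fin n) (Fin p) ℝ}
    {F : Matrix (Fin m) (Fin m) ℝ} {G : Matrix (Fin m) (Fin q) ℝ}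
    {L : Matrix (Fin q) (Fin m) ℝ} {P : Matrix (Fin n) (Fin m) ℝ}
    {Q : Matrix (Fin p) (Fin m) ℝ} {R : Matrix (Fin p) (Fin q) ℝ}
    {K : Matrix (Fin p) (Fin n) ℝ} (hPF : P * F = A * P + B * Q)
    {x₁ : ℝ → Fin n → ℝ} {x₂ : ℝ → Fin m → ℝ} {c : Fin n → ℝ} {u : Fin p → ℝ}
    {ubar : Fin q → ℝ} {t : ℝ}
    (hx₁ : HasDerivAt x₁ (A *ᵥ x₁ t + B *ᵥ u + c) t)
    (hx₂ : HasDerivAt x₂ ((F + G * L) *ᵥ x₂ t + G *ᵥ ubar) t)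
    (hu : u = R *ᵥ ubar + (Q + R * L) *ᵥ x₂ t + K *ᵥ (x₁ t - P *ᵥ x₂ t)) :
    HasDerivAt (fun s => Sum.elim (x₁ s - P *ᵥ x₂ s) (x₂ s))
      (fromBlocks (A + B * K) 0 0 (F + G * L) *ᵥ Sum.elim (x₁ t - P *ᵥ x₂ t) (x₂ t)
        + (Sum.elim ((B * R - P * G) *ᵥ (L *ᵥ x₂ t)) 0
          + Sum.elim ((B * R - P * G) *ᵥ ubar) (G *ᵥ ubar) + Sum.elim c 0)) t := by
  refine ((hx₁.sub (hx₂.mulVec_s15 P)).sumElim hx₂).congr_deriv ?_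
  rw [tracking_error_dynamics hPF hu, fromBlocks_mulVec]
  simp only [Sum.elim_comp_inl, Sum.elim_comp_inr, zero_mulVec, add_zero, zero_add,
    ← Sum.elim_add_add]
  congr 1
  abel

theorem stmt_15_general {n m p q b : ℕ}
    (A : Matrix (Fin n) (Fin n) ℝ) (B : Matrix (Fin n) (Fin p) ℝ)
    (F : Matrix (Fin m) (Fin m) ℝ) (G : Matrix (Fin m) (Fin q) ℝ)
    (L : Matrix (Fin q) (Fin m) ℝ)
    (P : Matrix (Fin n) (Fin m) ℝ) (Q : Matrix (Fin p) (Fin m) ℝ)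
    (R : Matrix (Fin p) (Fin q) ℝ) (K : Matrix (Fin p) (Fin n) ℝ)
    (hPF : P * F = A * P + B * Q)
    (M : Matrix (Fin n ⊕ Fin m) (Fin n ⊕ Fin m) ℝ) (hM : M.PosDef)
    (lam κ : ℝ) (hlam : 0 < lam) (hκ : 0 < κ)
    (E : Matrix (Fin b) (Fin n ⊕ Fin m) ℝ) (W : Matrix (Fin b) (Fin b) ℝ)
    (hWpos : ∀ i j, 0 ≤ W i j)
    (hLMI : (-((Matrix.fromBlocks (A + B * K) 0 0 (F + G * L))ᵀ * M
        + M * Matrix.fromBlocks (A + B * K) 0 0 (F + G * L)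
        + Eᵀ * W * E + lam • M)).PosSemidef)
    (x₁ : ℝ → Fin n → ℝ) (x₂ : ℝ → Fin m → ℝ)
    (u₁ : ℝ → Fin p → ℝ) (ubar₂ : ℝ → Fin q → ℝ) (c : ℝ → Fin n → ℝ)
    (β₁ β₂ β₃ : ℝ)
    (hx₁ : ∀ t ≥ (0 : ℝ), HasDerivAt x₁ (A *ᵥ x₁ t + B *ᵥ u₁ t + c t) t)
    (hu₁ : ∀ t ≥ (0 : ℝ),
      u₁ t = R *ᵥ ubar₂ t + (Q + R * L) *ᵥ x₂ t + K *ᵥ (x₁ t - P *ᵥ x₂ t))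
    (hx₂ : ∀ t ≥ (0 : ℝ), HasDerivAt x₂ ((F + G * L) *ᵥ x₂ t + G *ᵥ ubar₂ t) t)
    (hcell : ∀ t ≥ (0 : ℝ), ∀ i, 0 ≤ (E *ᵥ Sum.elim (x₁ t - P *ᵥ x₂ t) (x₂ t)) i)
    (hβ₁ : ∀ t ≥ (0 : ℝ),
      Real.sqrt (Sum.elim ((B * R - P * G) *ᵥ (L *ᵥ x₂ t)) 0 ⬝ᵥ
        M *ᵥ Sum.elim ((B * R - P * G) *ᵥ (L *ᵥ x₂ t)) 0) ≤ β₁)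
    (hβ₂ : ∀ t ≥ (0 : ℝ),
      Real.sqrt (Sum.elim ((B * R - P * G) *ᵥ ubar₂ t) (G *ᵥ ubar₂ t) ⬝ᵥ
        M *ᵥ Sum.elim ((B * R - P * G) *ᵥ ubar₂ t) (G *ᵥ ubar₂ t)) ≤ β₂)
    (hβ₃ : ∀ t ≥ (0 : ℝ),
      Real.sqrt (Sum.elim (c t) 0 ⬝ᵥ M *ᵥ Sum.elim (c t) 0) ≤ β₃)
    (hV0 : (1 / κ) * Real.sqrt (Sum.elim (x₁ 0 - P *ᵥ x₂ 0) (x₂ 0) ⬝ᵥ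
        M *ᵥ Sum.elim (x₁ 0 - P *ᵥ x₂ 0) (x₂ 0)) ≤
      (2 / (lam * κ)) * (β₁ + β₂ + β₃)) :
    ∀ t ≥ (0 : ℝ),
      (1 / κ) * Real.sqrt (Sum.elim (x₁ t - P *ᵥ x₂ t) (x₂ t) ⬝ᵥ
          M *ᵥ Sum.elim (x₁ t - P *ᵥ x₂ t) (x₂ t)) ≤
        (2 / (lam * κ)) * (β₁ + β₂ + β₃) := by
  intro t ht
  have hM' := hM.posSemidef
  have hlevel : 2 / (lam * κ) * (β₁ + β₂ + β₃) = 1 / κ * (2 * (β₁ + β₂ + β₃) / lam) := by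
    field_simp
  have hκ' : 0 < 1 / κ := by positivity
  rw [hlevel] at hV0 ⊢
  refine mul_le_mul_of_nonneg_left ?_ hκ'.le
  refine hM'.sqrt_dotProduct_mulVec_le_of_hasDerivAt hlam
    (fun s hs => hasDerivAt_trackingError hPF (hx₁ s hs) (hx₂ s hs) (hu₁ s hs))
    (fun s hs => two_mul_dotProduct_mulVec_le_of_posSemidef_neg hM' hLMI
      (dotProduct_transpose_mul_mul_mulVec_nonneg hWpos (hcell s hs)))
    (fun s hs => ?_) ((mul_le_mul_iff_right₀ hκ').1 hV0) ht
  calc _ ≤ _ := hM'.sqrt_dotProduct_mulVec_add_le _ _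
    _ ≤ _ := add_le_add_left (hM'.sqrt_dotProduct_mulVec_add_le _ _) _
    _ ≤ β₁ + β₂ + β₃ := by linarith [hβ₁ s hs, hβ₂ s hs, hβ₃ s hs]

/-- Forward invariance of the robust approximate simulation relation: under the
hypotheses of the single-mode Theorem 1 with cell boundaries through the origin, the
sublevel set of the simulation function `V(ω) = (1/κ)√(ωᵀMω)` of level
`b = (2/(λκ))(β₁ + β₂ + β₃)` is forward invariant: if `V(ω(0)) ≤ b` then
`V(ω(t)) ≤ b` for all `t ≥ 0`, where `ω(t) = (x₁(t) - P x₂(t), x₂(t))`. -/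
theorem stmt_15 {n m p q k b : ℕ}
    (A : Matrix (Fin n) (Fin n) ℝ) (B : Matrix (Fin n) (Fin p) ℝ)
    (C : Matrix (Fin k) (Fin n) ℝ)
    (F : Matrix (Fin m) (Fin m) ℝ) (G : Matrix (Fin m) (Fin q) ℝ)
    (H : Matrix (Fin k) (Fin m) ℝ) (L : Matrix (Fin q) (Fin m) ℝ)
    (P : Matrix (Fin n) (Fin m) ℝ) (Q : Matrix (Fin p) (Fin m) ℝ)
    (R : Matrix (Fin p) (Fin q) ℝ) (K : Matrix (Fin p) (Fin n) ℝ)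
    (hH : H = C * P) (hPF : P * F = A * P + B * Q)
    (M : Matrix (Fin n ⊕ Fin m) (Fin n ⊕ Fin m) ℝ) (hM : M.PosDef)
    (lam κ : ℝ) (hlam : 0 < lam) (hκ : 0 < κ)
    (E : Matrix (Fin b) (Fin n ⊕ Fin m) ℝ) (W : Matrix (Fin b) (Fin b) ℝ)
    (hW : W.IsSymm) (hWpos : ∀ i j, 0 ≤ W i j)
    (hCLMI : (M - (Matrix.fromCols C 0)ᵀ * Matrix.fromCols C 0).PosSemidef)
    (hLMI : (-((Matrix.fromBlocks (A + B * K) 0 0 (F + G * L))ᵀ * M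
        + M * Matrix.fromBlocks (A + B * K) 0 0 (F + G * L)
        + Eᵀ * W * E + lam • M)).PosSemidef)
    (x₁ : ℝ → Fin n → ℝ) (x₂ : ℝ → Fin m → ℝ)
    (u₁ : ℝ → Fin p → ℝ) (ubar₂ : ℝ → Fin q → ℝ) (c : ℝ → Fin n → ℝ)
    (β₁ β₂ β₃ : ℝ)
    (hx₁ : ∀ t ≥ (0 : ℝ), HasDerivAt x₁ (A *ᵥ x₁ t + B *ᵥ u₁ t + c t) t)
    (hu₁ : ∀ t ≥ (0 : ℝ),
      u₁ t = R *ᵥ ubar₂ t + (Q + R * L) *ᵥ x₂ t + K *ᵥ (x₁ t - P *ᵥ x₂ t))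
    (hx₂ : ∀ t ≥ (0 : ℝ), HasDerivAt x₂ ((F + G * L) *ᵥ x₂ t + G *ᵥ ubar₂ t) t)
    (hcell : ∀ t ≥ (0 : ℝ), ∀ i, 0 ≤ (E *ᵥ Sum.elim (x₁ t - P *ᵥ x₂ t) (x₂ t)) i)
    (hβ₁ : ∀ t ≥ (0 : ℝ),
      Real.sqrt (Sum.elim ((B * R - P * G) *ᵥ (L *ᵥ x₂ t)) 0 ⬝ᵥ
        M *ᵥ Sum.elim ((B * R - P * G) *ᵥ (L *ᵥ x₂ t)) 0) ≤ β₁)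
    (hβ₂ : ∀ t ≥ (0 : ℝ),
      Real.sqrt (Sum.elim ((B * R - P * G) *ᵥ ubar₂ t) (G *ᵥ ubar₂ t) ⬝ᵥ
        M *ᵥ Sum.elim ((B * R - P * G) *ᵥ ubar₂ t) (G *ᵥ ubar₂ t)) ≤ β₂)
    (hβ₃ : ∀ t ≥ (0 : ℝ),
      Real.sqrt (Sum.elim (c t) 0 ⬝ᵥ M *ᵥ Sum.elim (c t) 0) ≤ β₃)
    (hV0 : (1 / κ) * Real.sqrt (Sum.elim (x₁ 0 - P *ᵥ x₂ 0) (x₂ 0) ⬝ᵥ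
        M *ᵥ Sum.elim (x₁ 0 - P *ᵥ x₂ 0) (x₂ 0)) ≤
      (2 / (lam * κ)) * (β₁ + β₂ + β₃)) :
    ∀ t ≥ (0 : ℝ),
      (1 / κ) * Real.sqrt (Sum.elim (x₁ t - P *ᵥ x₂ t) (x₂ t) ⬝ᵥ
          M *ᵥ Sum.elim (x₁ t - P *ᵥ x₂ t) (x₂ t)) ≤
        (2 / (lam * κ)) * (β₁ + β₂ + β₃) :=
  stmt_15_general A B F G L P Q R K hPF M hM lam κ hlam hκ E W hWpos hLMI x₁ x₂ u₁ ubar₂ c β₁ β₂ β₃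
    hx₁ hu₁ hx₂ hcell hβ₁ hβ₂ hβ₃ hV0
end
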